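/- Let (A,σ) be a ring with involution. A sesquilinear form (M,s) over (A,σ) is hyperbolic if and only if there exist submodules M₁, M₂ ≤ M such that M = M₁ ⊕ M₂ (internal direct sum) and s(M₁,M₁) = s(M₂,M₂) = 0. Furthermore, if (M,s) is unimodular and ε-hermitian, then (M,s) is hyperbolic as a sesquilinear form if and only if it is hyperbolic as a unimodular ε-hermitian form. -/

import Mathlib

open CategoryTheory CategoryTheory.Limits

noncomputable section

universe v u

namespace HermCat

variable {C : Type u} [Category.{v} C] [Preadditive C]

/-- A hermitian structure on an additive category `C`: a contravariant additive
functor `*` together with a natural transformation `ω : id → **` satisfying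
`(ω_X)* ∘ ω_{X*} = id_{X*}`. -/
structure HermStructure (C : Type u) [Category.{v} C] [Preadditive C] where
  star : C → C
  starMap : ∀ {X Y : C}, (X ⟶ Y) → (star Y ⟶ star X)
  starMap_id : ∀ X : C, starMap (𝟙 X) = 𝟙 (star X)
  starMap_comp : ∀ {X Y Z : C} (f : X ⟶ Y) (g : Y ⟶ Z),
    starMap (f ≫ g) = starMap g ≫ starMap f
  starMap_add : ∀ {X Y : C} (f g : X ⟶ Y), starMap (f + g) = starMap f + starMap g
  omega : ∀ X : C, X ⟶ star (star X)
  omega_natural : ∀ {X Y : C} (f : X ⟶ Y),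
    f ≫ omega Y = omega X ≫ starMap (starMap f)
  omega_star : ∀ X : C, omega (star X) ≫ starMap (omega X) = 𝟙 (star X)

namespace HermStructure

variable (H : HermStructure C)

/-- The additive-monoid-hom incarnation of `starMap`. -/
def starHom (X Y : C) : (X ⟶ Y) →+ (H.star Y ⟶ H.star X) :=
  AddMonoidHom.mk' H.starMap (fun f g => H.starMap_add f g)

theorem starMap_zero (X Y : C) : H.starMap (0 : X ⟶ Y) = 0 :=
  (H.starHom X Y).map_zero

theorem starMap_neg {X Y : C} (f : X ⟶ Y) : H.starMap (-f) = -H.starMap f :=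
  (H.starHom X Y).map_neg f

theorem starMap_sub {X Y : C} (f g : X ⟶ Y) :
    H.starMap (f - g) = H.starMap f - H.starMap g :=
  (H.starHom X Y).map_sub f g

theorem starMap_nsmul {X Y : C} (n : ℕ) (f : X ⟶ Y) :
    H.starMap (n • f) = n • H.starMap f :=
  (H.starHom X Y).map_nsmul n f

theorem starMap_zsmul {X Y : C} (n : ℤ) (f : X ⟶ Y) :
    H.starMap (n • f) = n • H.starMap f :=
  (H.starHom X Y).map_zsmul n f

/-- An object is reflexive if `ω_X` is an isomorphism. -/
def Reflexive (X : C) : Prop := IsIso (H.omega X)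

/-- A sesquilinear form `s : M ⟶ M*` is unimodular if `s` and `s* ∘ ω_M` are
isomorphisms. -/
def IsUnimodular {M : C} (s : M ⟶ H.star M) : Prop :=
  IsIso s ∧ IsIso (H.omega M ≫ H.starMap s)

/-- A sesquilinear form `s : M ⟶ M*` is `ε`-hermitian if `s = ε • (s* ∘ ω_M)`. -/
def IsEpsHermitian (ε : ℤ) {M : C} (s : M ⟶ H.star M) : Prop :=
  s = ε • (H.omega M ≫ H.starMap s)

/-- `f` is an isometry from `(M, s)` to `(M', s')` if it is an isomorphism with
`s = f* ∘ s' ∘ f`. -/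
def IsIsometry {M M' : C} (s : M ⟶ H.star M) (s' : M' ⟶ H.star M')
    (f : M ⟶ M') : Prop :=
  IsIso f ∧ s = f ≫ s' ≫ H.starMap f

/-- Two sesquilinear forms are isometric if there is an isometry between them. -/
def Isometric {M M' : C} (s : M ⟶ H.star M) (s' : M' ⟶ H.star M') : Prop :=
  ∃ f : M ⟶ M', H.IsIsometry s s' f

section Biprod

variable [HasBinaryBiproducts C]

/-- The underlying object `Q ⊕ Q*` of the hyperbolic form. -/
def hypObj (Q : C) : C := Q ⊞ H.star Q

/-- The hyperbolic `ε`-hermitian form `H_ε(Q)` on `Q ⊕ Q*`, given in matrix form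
by `[[0, id_{Q*}], [ε·ω_Q, 0]]` (composed with the canonical identification
`Q* ⊕ Q** ≅ (Q ⊕ Q*)*`). -/
def hypForm (ε : ℤ) (Q : C) : H.hypObj Q ⟶ H.star (H.hypObj Q) :=
  biprod.lift (biprod.snd) (ε • (biprod.fst ≫ H.omega Q)) ≫
    biprod.desc (H.starMap biprod.fst) (H.starMap biprod.snd)

/-- A form is hyperbolic (as a unimodular `ε`-hermitian form) if it is isometric
to `(Q ⊕ Q*, H_ε(Q))` for some reflexive object `Q`. -/
def IsHyperbolic (ε : ℤ) {M : C} (s : M ⟶ H.star M) : Prop :=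
  ∃ Q : C, H.Reflexive Q ∧ H.Isometric s (H.hypForm ε Q)

/-- The orthogonal sum of two sesquilinear forms. -/
def orthSum {M M' : C} (s : M ⟶ H.star M) (s' : M' ⟶ H.star M') :
    M ⊞ M' ⟶ H.star (M ⊞ M') :=
  biprod.desc (s ≫ H.starMap biprod.fst) (s' ≫ H.starMap biprod.snd)

/-- The "split" form `[[0, f], [g, 0]]` on `M ⊕ N`, where `f : N ⟶ M*` and
`g : M ⟶ N*`. -/
def splitForm {M N : C} (f : N ⟶ H.star M) (g : M ⟶ H.star N) :
    M ⊞ N ⟶ H.star (M ⊞ N) :=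
  biprod.desc (g ≫ H.starMap biprod.snd) (f ≫ H.starMap biprod.fst)

end Biprod

end HermStructure

/-! ## The category of twisted double arrows -/

variable {ι : Type v}

/-- Objects of the category `TDA_I(C)` of twisted double `I`-arrows: quadruples
`(M, N, {f_i}, {g_i})` with `f_i, g_i : M ⟶ N^{*_i}`. -/
structure TDAObj (Hs : ι → HermStructure C) : Type (max u v) where
  M : C
  N : C
  f : ∀ i, M ⟶ (Hs i).star N
  g : ∀ i, M ⟶ (Hs i).star N

namespace TDAObj

variable {Hs : ι → HermStructure C}

/-- Morphisms `(M,N,{f_i},{g_i}) ⟶ (M',N',{f'_i},{g'_i})` in `TDA_I(C)`: pairs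
`(φ, ψ^op)` with `φ : M ⟶ M'`, `ψ : N' ⟶ N`, `f'_i ∘ φ = ψ^{*_i} ∘ f_i` and
`g'_i ∘ φ = ψ^{*_i} ∘ g_i`. -/
@[ext]
structure Hom (Z Z' : TDAObj Hs) : Type v where
  φ : Z.M ⟶ Z'.M
  ψ : Z'.N ⟶ Z.N
  condf : ∀ i, φ ≫ Z'.f i = Z.f i ≫ (Hs i).starMap ψ
  condg : ∀ i, φ ≫ Z'.g i = Z.g i ≫ (Hs i).starMap ψ

instance category : Category (TDAObj Hs) where
  Hom := Hom
  id Z := ⟨𝟙 Z.M, 𝟙 Z.N, fun i => by simp [(Hs i).starMap_id],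
    fun i => by simp [(Hs i).starMap_id]⟩
  comp {Z Z' Z''} u v := ⟨u.φ ≫ v.φ, v.ψ ≫ u.ψ,
    fun i => by
      rw [Category.assoc, v.condf i, ← Category.assoc, u.condf i, (Hs i).starMap_comp,
        Category.assoc],
    fun i => by
      rw [Category.assoc, v.condg i, ← Category.assoc, u.condg i, (Hs i).starMap_comp,
        Category.assoc]⟩
  id_comp u := by apply Hom.ext <;> simp
  comp_id u := by apply Hom.ext <;> simp
  assoc u v w := by apply Hom.ext <;> simp

@[simp] theorem id_φ (Z : TDAObj Hs) : Hom.φ (𝟙 Z) = 𝟙 Z.M := rfl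
@[simp] theorem id_ψ (Z : TDAObj Hs) : Hom.ψ (𝟙 Z) = 𝟙 Z.N := rfl
@[simp] theorem comp_φ {Z Z' Z'' : TDAObj Hs} (u : Z ⟶ Z') (v : Z' ⟶ Z'') :
    (u ≫ v).φ = u.φ ≫ v.φ := rfl
@[simp] theorem comp_ψ {Z Z' Z'' : TDAObj Hs} (u : Z ⟶ Z') (v : Z' ⟶ Z'') :
    (u ≫ v).ψ = v.ψ ≫ u.ψ := rfl

theorem hom_ext {Z Z' : TDAObj Hs} {u v : Z ⟶ Z'} (h1 : Hom.φ u = Hom.φ v)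
    (h2 : Hom.ψ u = Hom.ψ v) : u = v := Hom.ext h1 h2

instance homZero (Z Z' : TDAObj Hs) : Zero (Z ⟶ Z') :=
  ⟨⟨0, 0, fun i => by simp [(Hs i).starMap_zero], fun i => by simp [(Hs i).starMap_zero]⟩⟩

instance homAdd (Z Z' : TDAObj Hs) : Add (Z ⟶ Z') :=
  ⟨fun u v => ⟨u.φ + v.φ, u.ψ + v.ψ,
    fun i => by simp [Preadditive.add_comp, Preadditive.comp_add, (Hs i).starMap_add,
      u.condf i, v.condf i],
    fun i => by simp [Preadditive.add_comp, Preadditive.comp_add, (Hs i).starMap_add,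
      u.condg i, v.condg i]⟩⟩

instance homNeg (Z Z' : TDAObj Hs) : Neg (Z ⟶ Z') :=
  ⟨fun u => ⟨-u.φ, -u.ψ,
    fun i => by simp [Preadditive.neg_comp, Preadditive.comp_neg, (Hs i).starMap_neg,
      u.condf i],
    fun i => by simp [Preadditive.neg_comp, Preadditive.comp_neg, (Hs i).starMap_neg,
      u.condg i]⟩⟩

instance homSub (Z Z' : TDAObj Hs) : Sub (Z ⟶ Z') :=
  ⟨fun u v => ⟨u.φ - v.φ, u.ψ - v.ψ,
    fun i => by simp [Preadditive.sub_comp, Preadditive.comp_sub, (Hs i).starMap_sub,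
      u.condf i, v.condf i],
    fun i => by simp [Preadditive.sub_comp, Preadditive.comp_sub, (Hs i).starMap_sub,
      u.condg i, v.condg i]⟩⟩

instance homSMulNat (Z Z' : TDAObj Hs) : SMul ℕ (Z ⟶ Z') :=
  ⟨fun n u => ⟨n • u.φ, n • u.ψ,
    fun i => by simp [Preadditive.nsmul_comp, Preadditive.comp_nsmul, (Hs i).starMap_nsmul,
      u.condf i],
    fun i => by simp [Preadditive.nsmul_comp, Preadditive.comp_nsmul, (Hs i).starMap_nsmul,
      u.condg i]⟩⟩

instance homSMulInt (Z Z' : TDAObj Hs) : SMul ℤ (Z ⟶ Z') :=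
  ⟨fun n u => ⟨n • u.φ, n • u.ψ,
    fun i => by simp [Preadditive.zsmul_comp, Preadditive.comp_zsmul, (Hs i).starMap_zsmul,
      u.condf i],
    fun i => by simp [Preadditive.zsmul_comp, Preadditive.comp_zsmul, (Hs i).starMap_zsmul,
      u.condg i]⟩⟩

@[simp] theorem add_φ {Z Z' : TDAObj Hs} (u v : Z ⟶ Z') : (u + v).φ = u.φ + v.φ := rfl
@[simp] theorem add_ψ {Z Z' : TDAObj Hs} (u v : Z ⟶ Z') : (u + v).ψ = u.ψ + v.ψ := rfl
@[simp] theorem zero_φ {Z Z' : TDAObj Hs} : (0 : Z ⟶ Z').φ = 0 := rfl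
@[simp] theorem zero_ψ {Z Z' : TDAObj Hs} : (0 : Z ⟶ Z').ψ = 0 := rfl
@[simp] theorem neg_φ {Z Z' : TDAObj Hs} (u : Z ⟶ Z') : (-u).φ = -u.φ := rfl
@[simp] theorem neg_ψ {Z Z' : TDAObj Hs} (u : Z ⟶ Z') : (-u).ψ = -u.ψ := rfl

instance homAddCommGroup (Z Z' : TDAObj Hs) : AddCommGroup (Z ⟶ Z') :=
  Function.Injective.addCommGroup (fun u => (Hom.φ u, Hom.ψ u))
    (fun u v h => by
      apply hom_ext
      · exact congrArg Prod.fst h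
      · exact congrArg Prod.snd h)
    rfl (fun _ _ => rfl) (fun _ => rfl) (fun _ _ => rfl) (fun _ _ => rfl) (fun _ _ => rfl)

instance preadditive : Preadditive (TDAObj Hs) where
  add_comp Z Z' Z'' u u' v := by apply hom_ext <;> simp
  comp_add Z Z' Z'' u v v' := by apply hom_ext <;> simp

end TDAObj

/-- The hermitian structure on the category of twisted double `I`-arrows. -/
def tdaHerm (Hs : ι → HermStructure C) : HermStructure (TDAObj Hs) where
  star Z := ⟨Z.N, Z.M, fun i => (Hs i).omega Z.N ≫ (Hs i).starMap (Z.g i),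
    fun i => (Hs i).omega Z.N ≫ (Hs i).starMap (Z.f i)⟩
  starMap {Z Z'} u := ⟨u.ψ, u.φ,
    fun i => by
      rw [← Category.assoc, (Hs i).omega_natural u.ψ, Category.assoc, Category.assoc,
        ← (Hs i).starMap_comp, ← u.condg i, (Hs i).starMap_comp],
    fun i => by
      rw [← Category.assoc, (Hs i).omega_natural u.ψ, Category.assoc, Category.assoc,
        ← (Hs i).starMap_comp, ← u.condf i, (Hs i).starMap_comp]⟩
  starMap_id Z := by apply TDAObj.hom_ext <;> rfl
  starMap_comp u v := by apply TDAObj.hom_ext <;> rfl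
  starMap_add u v := by apply TDAObj.hom_ext <;> rfl
  omega Z := ⟨𝟙 Z.M, 𝟙 Z.N,
    fun i => by
      simp only [Category.id_comp, (Hs i).starMap_id, Category.comp_id]
      rw [(Hs i).starMap_comp, ← Category.assoc, ← (Hs i).omega_natural (Z.f i),
        Category.assoc, (Hs i).omega_star, Category.comp_id],
    fun i => by
      simp only [Category.id_comp, (Hs i).starMap_id, Category.comp_id]
      rw [(Hs i).starMap_comp, ← Category.assoc, ← (Hs i).omega_natural (Z.g i),
        Category.assoc, (Hs i).omega_star, Category.comp_id]⟩
  omega_natural u := by apply TDAObj.hom_ext <;> simp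
  omega_star Z := by apply TDAObj.hom_ext <;> simp

/-! ## Biproducts in `TDA_I(C)` -/

namespace TDAObj

variable {Hs : ι → HermStructure C} [HasBinaryBiproducts C]

/-- The biproduct of two objects of `TDA_I(C)`. -/
def biprodObj (Z W : TDAObj Hs) : TDAObj Hs where
  M := Z.M ⊞ W.M
  N := Z.N ⊞ W.N
  f i := biprod.desc (Z.f i ≫ (Hs i).starMap biprod.fst) (W.f i ≫ (Hs i).starMap biprod.snd)
  g i := biprod.desc (Z.g i ≫ (Hs i).starMap biprod.fst) (W.g i ≫ (Hs i).starMap biprod.snd)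

/-- The binary bicone exhibiting `biprodObj Z W` as a biproduct. -/
def biprodBicone (Z W : TDAObj Hs) : BinaryBicone Z W where
  pt := biprodObj Z W
  fst := ⟨biprod.fst, biprod.inl,
    fun i => by
      apply biprod.hom_ext' <;>
      simp [biprodObj, ← (Hs i).starMap_comp, (Hs i).starMap_zero, (Hs i).starMap_id],
    fun i => by
      apply biprod.hom_ext' <;>
      simp [biprodObj, ← (Hs i).starMap_comp, (Hs i).starMap_zero, (Hs i).starMap_id]⟩
  snd := ⟨biprod.snd, biprod.inr,
    fun i => by
      apply biprod.hom_ext' <;>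
      simp [biprodObj, ← (Hs i).starMap_comp, (Hs i).starMap_zero, (Hs i).starMap_id],
    fun i => by
      apply biprod.hom_ext' <;>
      simp [biprodObj, ← (Hs i).starMap_comp, (Hs i).starMap_zero, (Hs i).starMap_id]⟩
  inl := ⟨biprod.inl, biprod.fst,
    fun i => by simp [biprodObj],
    fun i => by simp [biprodObj]⟩
  inr := ⟨biprod.inr, biprod.snd,
    fun i => by simp [biprodObj],
    fun i => by simp [biprodObj]⟩
  inl_fst := by apply hom_ext <;> first | exact biprod.inl_fst | exact biprod.inl_snd | exact biprod.inr_fst | exact biprod.inr_snd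
  inl_snd := by apply hom_ext <;> first | exact biprod.inl_fst | exact biprod.inl_snd | exact biprod.inr_fst | exact biprod.inr_snd
  inr_fst := by apply hom_ext <;> first | exact biprod.inl_fst | exact biprod.inl_snd | exact biprod.inr_fst | exact biprod.inr_snd
  inr_snd := by apply hom_ext <;> first | exact biprod.inl_fst | exact biprod.inl_snd | exact biprod.inr_fst | exact biprod.inr_snd

instance hasBinaryBiproducts : HasBinaryBiproducts (TDAObj Hs) where
  has_binary_biproduct Z W :=
    hasBinaryBiproduct_of_total (biprodBicone Z W) (by apply hom_ext <;> exact biprod.total)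

end TDAObj

/-! ## Isomorphisms in `TDA_I(C)` -/

namespace TDAObj

variable {Hs : ι → HermStructure C}

theorem isIso_of {Z Z' : TDAObj Hs} (u : Z ⟶ Z') (h1 : IsIso u.φ) (h2 : IsIso u.ψ) :
    IsIso u := by
  refine ⟨⟨⟨inv u.φ, inv u.ψ, fun i => ?_, fun i => ?_⟩, ?_, ?_⟩⟩
  · have h := u.condf i
    have : Z'.f i = inv u.φ ≫ Z.f i ≫ (Hs i).starMap u.ψ := by
      rw [← h, IsIso.inv_hom_id_assoc]
    rw [this, Category.assoc, Category.assoc, ← (Hs i).starMap_comp,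
      IsIso.inv_hom_id, (Hs i).starMap_id, Category.comp_id]
  · have h := u.condg i
    have : Z'.g i = inv u.φ ≫ Z.g i ≫ (Hs i).starMap u.ψ := by
      rw [← h, IsIso.inv_hom_id_assoc]
    rw [this, Category.assoc, Category.assoc, ← (Hs i).starMap_comp,
      IsIso.inv_hom_id, (Hs i).starMap_id, Category.comp_id]
  · apply hom_ext <;> simp
  · apply hom_ext <;> simp

end TDAObj

/-! ## Categories of (systems of) sesquilinear forms -/

/-- Objects of the category `Sesq(C)` of sesquilinear forms over `(C, H)`. -/
structure FormObj (H : HermStructure C) : Type (max u v) where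
  pt : C
  form : pt ⟶ H.star pt

namespace FormObj

variable {H : HermStructure C}

/-- `Sesq(C)`: morphisms are isometries. -/
instance category : Category (FormObj H) where
  Hom X Y := { f : X.pt ⟶ Y.pt // H.IsIsometry X.form Y.form f }
  id X := ⟨𝟙 X.pt, inferInstance, by simp [H.starMap_id]⟩
  comp {X Y Z} u v := ⟨u.1 ≫ v.1, by
    obtain ⟨uf, hu1, hu2⟩ := u
    obtain ⟨vf, hv1, hv2⟩ := v
    haveI := hu1; haveI := hv1
    refine ⟨inferInstance, ?_⟩
    show X.form = (uf ≫ vf) ≫ Z.form ≫ H.starMap (uf ≫ vf)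
    rw [hu2, hv2, H.starMap_comp]
    simp⟩
  id_comp u := by apply Subtype.ext; simp
  comp_id u := by apply Subtype.ext; simp
  assoc u v w := by apply Subtype.ext; simp

@[simp] theorem id_val (X : FormObj H) : (𝟙 X : X ⟶ X).1 = 𝟙 X.pt := rfl
@[simp] theorem comp_val {X Y Z : FormObj H} (u : X ⟶ Y) (v : Y ⟶ Z) :
    (u ≫ v).1 = u.1 ≫ v.1 := rfl

end FormObj

/-- The predicate selecting unimodular `ε`-hermitian forms. -/
def hermPred (H : HermStructure C) (ε : ℤ) : FormObj H → Prop :=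
  fun X => H.IsUnimodular X.form ∧ H.IsEpsHermitian ε X.form

/-- The category `Herm_ε(C)` of unimodular `ε`-hermitian forms over `(C, H)`. -/
abbrev HermFormCat (H : HermStructure C) (ε : ℤ) := ObjectProperty.FullSubcategory (hermPred H ε)

/-- Objects of the category of systems of sesquilinear forms over `(C, {(*_i, ω_i)})`. -/
structure SysFormObj (Hs : ι → HermStructure C) : Type (max u v) where
  pt : C
  form : ∀ i, pt ⟶ (Hs i).star pt

namespace SysFormObj

variable {Hs : ι → HermStructure C}

/-- `f` is an isometry of systems of sesquilinear forms. -/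
def IsIsometry (X Y : SysFormObj Hs) (f : X.pt ⟶ Y.pt) : Prop :=
  IsIso f ∧ ∀ i, X.form i = f ≫ Y.form i ≫ (Hs i).starMap f

/-- Two systems of sesquilinear forms are isometric. -/
def Isometric (X Y : SysFormObj Hs) : Prop := ∃ f, IsIsometry X Y f

/-- The category of systems of sesquilinear forms, with isometries as morphisms. -/
instance category : Category (SysFormObj Hs) where
  Hom X Y := { f : X.pt ⟶ Y.pt // IsIsometry X Y f }
  id X := ⟨𝟙 X.pt, inferInstance, fun i => by simp [(Hs i).starMap_id]⟩
  comp {X Y Z} u v := ⟨u.1 ≫ v.1, by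
    obtain ⟨uf, hu1, hu2⟩ := u
    obtain ⟨vf, hv1, hv2⟩ := v
    haveI := hu1; haveI := hv1
    refine ⟨inferInstance, fun i => ?_⟩
    show X.form i = (uf ≫ vf) ≫ Z.form i ≫ (Hs i).starMap (uf ≫ vf)
    rw [hu2 i, hv2 i, (Hs i).starMap_comp]
    simp⟩
  id_comp u := by apply Subtype.ext; simp
  comp_id u := by apply Subtype.ext; simp
  assoc u v w := by apply Subtype.ext; simp

/-- The orthogonal sum of two systems of sesquilinear forms. -/
def orthSum [HasBinaryBiproducts C] (X Y : SysFormObj Hs) : SysFormObj Hs where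
  pt := X.pt ⊞ Y.pt
  form i := biprod.desc (X.form i ≫ (Hs i).starMap biprod.fst)
    (Y.form i ≫ (Hs i).starMap biprod.snd)

end SysFormObj

/-! ## The functor `F` from (systems of) sesquilinear forms to hermitian forms over `TDA` -/

section FFunctor

variable {Hs : ι → HermStructure C}

theorem HermStructure.omega_starMap_key (H : HermStructure C) {M : C}
    (s : M ⟶ H.star M) :
    H.omega M ≫ H.starMap (H.omega M ≫ H.starMap s) = s := by
  rw [H.starMap_comp, ← Category.assoc, ← H.omega_natural s, Category.assoc,
    H.omega_star, Category.comp_id]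

/-- The twisted double arrow `Z(M, {s_i}) = (M, M, {s_i^* ∘ ω_M}, {s_i})` associated with a
system of sesquilinear forms. -/
def sysZ {M : C} (s : ∀ i, M ⟶ (Hs i).star M) : TDAObj Hs :=
  ⟨M, M, fun i => (Hs i).omega M ≫ (Hs i).starMap (s i), fun i => s i⟩

/-- The canonical `1`-hermitian form `(id_M, id_M^op)` on `Z(M, {s_i})`. -/
def sysZForm {M : C} (s : ∀ i, M ⟶ (Hs i).star M) :
    sysZ s ⟶ (tdaHerm Hs).star (sysZ s) :=
  ⟨𝟙 M, 𝟙 M,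
    fun i => by
      simp only [tdaHerm, sysZ, Category.id_comp, (Hs i).starMap_id, Category.comp_id],
    fun i => by
      simp only [tdaHerm, sysZ, Category.id_comp, (Hs i).starMap_id, Category.comp_id]
      rw [(Hs i).omega_starMap_key]⟩

theorem sysZForm_isIso {M : C} (s : ∀ i, M ⟶ (Hs i).star M) : IsIso (sysZForm s) :=
  TDAObj.isIso_of (sysZForm s) (inferInstanceAs (IsIso (𝟙 M)))
    (inferInstanceAs (IsIso (𝟙 M)))

theorem sysZForm_unimodular {M : C} (s : ∀ i, M ⟶ (Hs i).star M) :
    (tdaHerm Hs).IsUnimodular (sysZForm s) := by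
  constructor
  · exact sysZForm_isIso s
  · exact TDAObj.isIso_of _ (inferInstanceAs (IsIso (𝟙 M ≫ 𝟙 M)))
      (inferInstanceAs (IsIso (𝟙 M ≫ 𝟙 M)))

theorem sysZForm_hermitian {M : C} (s : ∀ i, M ⟶ (Hs i).star M) :
    (tdaHerm Hs).IsEpsHermitian 1 (sysZForm s) := by
  apply TDAObj.hom_ext
  · show 𝟙 M = (1 : ℤ) • (𝟙 M ≫ 𝟙 M)
    simp
  · show 𝟙 M = (1 : ℤ) • (𝟙 M ≫ 𝟙 M)
    simp

/-- The object part of the functor `F`. -/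
def Fobj (X : SysFormObj Hs) : HermFormCat (tdaHerm Hs) 1 :=
  ⟨⟨sysZ X.form, sysZForm X.form⟩, ⟨sysZForm_unimodular X.form, sysZForm_hermitian X.form⟩⟩

/-- The map part of the functor `F`. -/
def Fmap {X Y : SysFormObj Hs} (u : X ⟶ Y) : Fobj X ⟶ Fobj Y := by
  haveI := u.2.1
  refine ⟨(⟨⟨u.1, @inv _ _ _ _ u.1 u.2.1, fun i => ?_, fun i => ?_⟩, ?_, ?_⟩ : (Fobj X).obj ⟶ (Fobj Y).obj)⟩
  · show u.1 ≫ (Hs i).omega Y.pt ≫ (Hs i).starMap (Y.form i) =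
      ((Hs i).omega X.pt ≫ (Hs i).starMap (X.form i)) ≫ (Hs i).starMap (inv u.1)
    calc u.1 ≫ (Hs i).omega Y.pt ≫ (Hs i).starMap (Y.form i)
        = (Hs i).omega X.pt ≫ (Hs i).starMap ((Hs i).starMap u.1) ≫
            (Hs i).starMap (Y.form i) := by
          rw [← Category.assoc, (Hs i).omega_natural u.1, Category.assoc]
      _ = (Hs i).omega X.pt ≫ (Hs i).starMap (Y.form i ≫ (Hs i).starMap u.1) := by
          rw [(Hs i).starMap_comp]
      _ = (Hs i).omega X.pt ≫ (Hs i).starMap (inv u.1 ≫ X.form i) := by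
          rw [u.2.2 i, IsIso.inv_hom_id_assoc]
      _ = ((Hs i).omega X.pt ≫ (Hs i).starMap (X.form i)) ≫ (Hs i).starMap (inv u.1) := by
          rw [(Hs i).starMap_comp, Category.assoc]
  · show u.1 ≫ Y.form i = X.form i ≫ (Hs i).starMap (inv u.1)
    rw [u.2.2 i, Category.assoc, Category.assoc, ← (Hs i).starMap_comp,
      IsIso.inv_hom_id, (Hs i).starMap_id, Category.comp_id]
  · exact TDAObj.isIso_of _ (by show IsIso u.1; infer_instance)
      (by show IsIso (inv u.1); infer_instance)
  · apply TDAObj.hom_ext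
    · show 𝟙 X.pt = u.1 ≫ 𝟙 Y.pt ≫ inv u.1
      simp
    · show 𝟙 X.pt = (u.1 ≫ 𝟙 Y.pt) ≫ inv u.1
      simp

/-- The functor `F` from systems of sesquilinear forms over `(C, {(*_i, ω_i)})` to
unimodular `1`-hermitian forms over `TDA_I(C)`, given by
`F(M, {s_i}) = ((M, M, {s_i^{*_i} ∘ ω_{i,M}}, {s_i}), (id_M, id_M^op))` and
`F(ψ) = (ψ, (ψ⁻¹)^op)`. -/
def Ffunctor (Hs : ι → HermStructure C) : SysFormObj Hs ⥤ HermFormCat (tdaHerm Hs) 1 where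
  obj := Fobj
  map := Fmap
  map_id X := by
    haveI : IsIso ((𝟙 X : X ⟶ X).1) := (𝟙 X : X ⟶ X).2.1
    apply ObjectProperty.hom_ext; apply Subtype.ext; apply TDAObj.hom_ext
    · rfl
    · show inv ((𝟙 X : X ⟶ X).1) = 𝟙 X.pt
      change inv (𝟙 X.pt) = 𝟙 X.pt
      simp
  map_comp {X Y Z} u v := by
    haveI := u.2.1; haveI := v.2.1
    haveI : IsIso ((u ≫ v).1) := (u ≫ v).2.1
    apply ObjectProperty.hom_ext; apply Subtype.ext; apply TDAObj.hom_ext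
    · rfl
    · show inv ((u ≫ v).1) = inv v.1 ≫ inv u.1
      change inv (u.1 ≫ v.1) = inv v.1 ≫ inv u.1
      simp

end FFunctor

end HermCat

namespace SesqRing

open MulOpposite

universe w

/-- An involution of a ring `A`: an additive map with `σ(ab) = σ(b)σ(a)` and `σ² = id`. -/
structure RingInvolution (A : Type*) [Ring A] where
  toFun : A → A
  map_add' : ∀ a b, toFun (a + b) = toFun a + toFun b
  map_mul' : ∀ a b, toFun (a * b) = toFun b * toFun a
  invol : ∀ a, toFun (toFun a) = a

variable {A : Type*} [Ring A]

instance : FunLike (RingInvolution A) A A where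
  coe := RingInvolution.toFun
  coe_injective := by rintro ⟨f, _, _, _⟩ ⟨g, _, _, _⟩ h; simpa using h

namespace RingInvolution

variable (σ : RingInvolution A)

theorem map_add (a b : A) : σ (a + b) = σ a + σ b := σ.map_add' a b
theorem map_mul (a b : A) : σ (a * b) = σ b * σ a := σ.map_mul' a b
theorem invol_apply (a : A) : σ (σ a) = a := σ.invol a

/-- `σ` as an additive monoid homomorphism. -/
def toAddMonoidHom : A →+ A := AddMonoidHom.mk' σ σ.map_add

theorem map_zero : σ (0 : A) = 0 := σ.toAddMonoidHom.map_zero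
theorem map_neg (a : A) : σ (-a) = -σ a := σ.toAddMonoidHom.map_neg a

theorem map_one : σ (1 : A) = 1 := by
  have h := σ.map_mul 1 (σ 1)
  rw [one_mul, invol_apply] at h
  rw [one_mul] at h
  exact h.symm

end RingInvolution

/-- A sesquilinear form over `(A, σ)` on a right `A`-module `M` (presented as a module over
`Aᵐᵒᵖ`): a biadditive map `s : M × M → A` with `s(xa, yb) = σ(a) s(x, y) b`. -/
structure SesqForm (σ : RingInvolution A) (M : Type w) [AddCommGroup M]
    [Module Aᵐᵒᵖ M] where
  bil : M → M → A
  add_left : ∀ x y z, bil (x + y) z = bil x z + bil y z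
  add_right : ∀ x y z, bil x (y + z) = bil x y + bil x z
  smul_left_right : ∀ (a b : A) (x y : M),
    bil (op a • x) (op b • y) = σ a * bil x y * b

namespace SesqForm

variable {σ : RingInvolution A} {M M' : Type w}
  [AddCommGroup M] [Module Aᵐᵒᵖ M] [AddCommGroup M'] [Module Aᵐᵒᵖ M']

theorem smul_left (s : SesqForm σ M) (a : A) (x y : M) :
    s.bil (op a • x) y = σ a * s.bil x y := by
  have h := s.smul_left_right a 1 x y
  rw [op_one, one_smul, mul_one] at h
  exact h

theorem smul_right (s : SesqForm σ M) (b : A) (x y : M) :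
    s.bil x (op b • y) = s.bil x y * b := by
  have h := s.smul_left_right 1 b x y
  rw [op_one, one_smul, σ.map_one, one_mul] at h
  exact h

/-- The orthogonal sum of two sesquilinear forms. -/
def prod (s : SesqForm σ M) (s' : SesqForm σ M') : SesqForm σ (M × M') where
  bil p q := s.bil p.1 q.1 + s'.bil p.2 q.2
  add_left x y z := by
    show s.bil (x.1 + y.1) z.1 + s'.bil (x.2 + y.2) z.2 = _
    rw [s.add_left, s'.add_left]; abel
  add_right x y z := by
    show s.bil x.1 (y.1 + z.1) + s'.bil x.2 (y.2 + z.2) = _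
    rw [s.add_right, s'.add_right]; abel
  smul_left_right a b x y := by
    show s.bil (op a • x.1) (op b • y.1) + s'.bil (op a • x.2) (op b • y.2) = _
    rw [s.smul_left_right, s'.smul_left_right, mul_add, add_mul]

end SesqForm

/-- Isometry of sesquilinear forms over `(A, σ)`. -/
def SesqIsometric {σ : RingInvolution A} {M M' : Type w}
    [AddCommGroup M] [Module Aᵐᵒᵖ M] [AddCommGroup M'] [Module Aᵐᵒᵖ M']
    (s : SesqForm σ M) (s' : SesqForm σ M') : Prop :=
  ∃ e : M ≃ₗ[Aᵐᵒᵖ] M', ∀ x y, s'.bil (e x) (e y) = s.bil x y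

/-- Isometry of systems of sesquilinear forms over `(A, {σ_i})`. -/
def SysSesqIsometric {ι : Type*} {σI : ι → RingInvolution A} {M M' : Type w}
    [AddCommGroup M] [Module Aᵐᵒᵖ M] [AddCommGroup M'] [Module Aᵐᵒᵖ M']
    (s : ∀ i, SesqForm (σI i) M) (s' : ∀ i, SesqForm (σI i) M') : Prop :=
  ∃ e : M ≃ₗ[Aᵐᵒᵖ] M', ∀ i x y, (s' i).bil (e x) (e y) = (s i).bil x y

/-! ### The twisted dual module -/

/-- The dual `M* = Hom_A(M, A)` of a right `A`-module, as a right `A`-module via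
`(f · a)(x) = σ(a) f(x)`. -/
def TwDual (σ : RingInvolution A) (M : Type w) [AddCommGroup M] [Module Aᵐᵒᵖ M] :=
  M →ₗ[Aᵐᵒᵖ] A

namespace TwDual

variable {σ : RingInvolution A} {M : Type w} [AddCommGroup M] [Module Aᵐᵒᵖ M]

instance : AddCommGroup (TwDual σ M) :=
  inferInstanceAs (AddCommGroup (M →ₗ[Aᵐᵒᵖ] A))

/-- The underlying linear map of an element of the twisted dual. -/
def toLin (f : TwDual σ M) : M →ₗ[Aᵐᵒᵖ] A := f

/-- Build an element of the twisted dual from a linear map. -/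
def ofLin (f : M →ₗ[Aᵐᵒᵖ] A) : TwDual σ M := f

theorem toLin_injective : Function.Injective (toLin (σ := σ) (M := M)) := fun _ _ h => h

@[simp] theorem toLin_add (f g : TwDual σ M) : (f + g).toLin = f.toLin + g.toLin := rfl

theorem ext' {f g : TwDual σ M} (h : ∀ x, f.toLin x = g.toLin x) : f = g :=
  toLin_injective (LinearMap.ext h)
@[simp] theorem toLin_zero : (0 : TwDual σ M).toLin = 0 := rfl

/-- The twisted right action `(f · a)(x) = σ(a) f(x)`. -/
instance : SMul Aᵐᵒᵖ (TwDual σ M) :=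
  ⟨fun a f => ofLin
    { toFun := fun x => σ (unop a) * f.toLin x
      map_add' := fun x y => by rw [map_add, mul_add]
      map_smul' := fun b x => by
        show σ (unop a) * f.toLin (b • x) = b • (σ (unop a) * f.toLin x)
        rw [map_smul]
        show σ (unop a) * (f.toLin x * unop b) = (σ (unop a) * f.toLin x) * unop b
        rw [mul_assoc] }⟩

@[simp] theorem smul_toLin (a : Aᵐᵒᵖ) (f : TwDual σ M) (x : M) :
    (a • f).toLin x = σ (unop a) * f.toLin x := rfl

instance module : Module Aᵐᵒᵖ (TwDual σ M) where
  one_smul f := toLin_injective <| LinearMap.ext fun x => by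
    show σ (unop 1) * f.toLin x = f.toLin x
    rw [MulOpposite.unop_one, σ.map_one, one_mul]
  mul_smul a b f := toLin_injective <| LinearMap.ext fun x => by
    show σ (unop (a * b)) * f.toLin x = σ (unop a) * (σ (unop b) * f.toLin x)
    rw [MulOpposite.unop_mul, σ.map_mul, mul_assoc]
  smul_zero a := toLin_injective <| LinearMap.ext fun x => by
    show σ (unop a) * (0 : M →ₗ[Aᵐᵒᵖ] A) x = (0 : M →ₗ[Aᵐᵒᵖ] A) x
    simp
  smul_add a f g := toLin_injective <| LinearMap.ext fun x => by
    show σ (unop a) * (f.toLin + g.toLin) x = (a • f).toLin x + (a • g).toLin x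
    rw [LinearMap.add_apply, mul_add]
    rfl
  add_smul a b f := toLin_injective <| LinearMap.ext fun x => by
    show σ (unop (a + b)) * f.toLin x = (a • f).toLin x + (b • f).toLin x
    rw [MulOpposite.unop_add, σ.map_add, add_mul]
    rfl
  zero_smul f := toLin_injective <| LinearMap.ext fun x => by
    show σ (unop 0) * f.toLin x = (0 : M →ₗ[Aᵐᵒᵖ] A) x
    rw [MulOpposite.unop_zero, σ.map_zero, zero_mul]
    simp

end TwDual

/-! ### Adjoints, unimodularity, hermitian and hyperbolic forms over `(A, σ)` -/

namespace SesqForm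

variable {σ : RingInvolution A} {M : Type w} [AddCommGroup M] [Module Aᵐᵒᵖ M]

/-- The right adjoint `x ↦ (y ↦ σ(s(y, x)))` of a sesquilinear form. -/
def rAdj (s : SesqForm σ M) : M →ₗ[Aᵐᵒᵖ] TwDual σ M where
  toFun x := TwDual.ofLin
    { toFun := fun y => σ (s.bil y x)
      map_add' := fun y z => by rw [s.add_left, σ.map_add]
      map_smul' := fun b y => by
        show σ (s.bil (op (unop b) • y) x) = σ (s.bil y x) * unop b
        rw [s.smul_left, σ.map_mul, σ.invol_apply] }
  map_add' x y := TwDual.toLin_injective <| LinearMap.ext fun z => by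
    show σ (s.bil z (x + y)) = σ (s.bil z x) + σ (s.bil z y)
    rw [s.add_right, σ.map_add]
  map_smul' a x := TwDual.toLin_injective <| LinearMap.ext fun z => by
    show σ (s.bil z (op (unop a) • x)) = σ (unop a) * σ (s.bil z x)
    rw [s.smul_right, σ.map_mul]

/-- The left adjoint `x ↦ (y ↦ s(x, y))` of a sesquilinear form. -/
def lAdj (s : SesqForm σ M) : M →ₗ[Aᵐᵒᵖ] TwDual σ M where
  toFun x := TwDual.ofLin
    { toFun := fun y => s.bil x y
      map_add' := fun y z => s.add_right x y z
      map_smul' := fun b y => by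
        show s.bil x (op (unop b) • y) = s.bil x y * unop b
        exact s.smul_right (unop b) x y }
  map_add' x y := TwDual.toLin_injective <| LinearMap.ext fun z => s.add_left x y z
  map_smul' a x := TwDual.toLin_injective <| LinearMap.ext fun z => by
    show s.bil (op (unop a) • x) z = σ (unop a) * s.bil x z
    exact s.smul_left (unop a) x z

/-- A sesquilinear form is unimodular if both adjoints are bijective. -/
def Unimodular (s : SesqForm σ M) : Prop :=
  Function.Bijective s.rAdj ∧ Function.Bijective s.lAdj

/-- A sesquilinear form is `ε`-hermitian if `σ(s(x, y)) = ε • s(y, x)`. -/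
def IsEpsHermitian (ε : ℤ) (s : SesqForm σ M) : Prop :=
  ∀ x y, σ (s.bil x y) = ε • s.bil y x

end SesqForm

/-- The hyperbolic `ε`-hermitian form `H_ε(V)` on `V ⊕ V*`, given by
`H_ε(V)(x ⊕ f, y ⊕ g) = f(y) + ε σ(g(x))`. -/
def hypSesqForm (ε : ℤ) (σ : RingInvolution A) (V : Type w) [AddCommGroup V]
    [Module Aᵐᵒᵖ V] : SesqForm σ (V × TwDual σ V) where
  bil p q := p.2.toLin q.1 + ε • σ (q.2.toLin p.1)
  add_left x y z := by
    show (x.2 + y.2).toLin z.1 + ε • σ (z.2.toLin (x.1 + y.1)) = _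
    rw [TwDual.toLin_add, LinearMap.add_apply, map_add, σ.map_add, smul_add]
    abel
  add_right x y z := by
    show x.2.toLin (y.1 + z.1) + ε • σ ((y.2 + z.2).toLin x.1) = _
    rw [map_add, TwDual.toLin_add, LinearMap.add_apply, σ.map_add, smul_add]
    abel
  smul_left_right a b x y := by
    show (op a • x.2).toLin (op b • y.1) + ε • σ ((op b • y.2).toLin (op a • x.1)) =
      σ a * (x.2.toLin y.1 + ε • σ (y.2.toLin x.1)) * b
    rw [TwDual.smul_toLin, TwDual.smul_toLin, map_smul, map_smul,
      MulOpposite.smul_eq_mul_unop, MulOpposite.smul_eq_mul_unop, MulOpposite.unop_op, MulOpposite.unop_op,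
      σ.map_mul, σ.map_mul, σ.invol_apply]
    simp only [smul_add, mul_add, add_mul, mul_smul_comm, smul_mul_assoc, mul_assoc]

end SesqRing

namespace SesqRing

open CategoryTheory HermCat MulOpposite

variable {A : Type u} [Ring A]

/-- The dual object functor on objects. -/
def dualStarObj (σ : RingInvolution A) (M : ModuleCat.{u} Aᵐᵒᵖ) : ModuleCat.{u} Aᵐᵒᵖ :=
  ModuleCat.of Aᵐᵒᵖ (TwDual σ M)

/-- The dual object functor on morphisms. -/
def dualStarMap (σ : RingInvolution A) {M N : ModuleCat.{u} Aᵐᵒᵖ} (f : M ⟶ N) :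
    dualStarObj σ N ⟶ dualStarObj σ M := ModuleCat.ofHom
  { toFun := fun g => TwDual.ofLin (TwDual.toLin (σ := σ) g ∘ₗ f.hom)
    map_add' := fun g h => TwDual.toLin_injective (σ := σ) (LinearMap.ext fun _ => rfl)
    map_smul' := fun a g => TwDual.toLin_injective (σ := σ) (LinearMap.ext fun _ => rfl) }

/-- The natural transformation `ω : id → **`, `ω_M(x)(f) = σ(f(x))`. -/
def dualOmega (σ : RingInvolution A) (M : ModuleCat.{u} Aᵐᵒᵖ) :
    M ⟶ dualStarObj σ (dualStarObj σ M) := ModuleCat.ofHom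
  { toFun := fun x => TwDual.ofLin (
    { toFun := fun g => σ (TwDual.toLin (σ := σ) g x)
      map_add' := fun g h => by
        show σ (TwDual.toLin (σ := σ) (g + h) x) =
          σ (TwDual.toLin (σ := σ) g x) + σ (TwDual.toLin (σ := σ) h x)
        exact σ.map_add _ _
      map_smul' := fun a g => by
        show σ (σ (unop a) * TwDual.toLin (σ := σ) g x) = a • σ (TwDual.toLin (σ := σ) g x)
        rw [σ.map_mul, σ.invol_apply]
        rfl })
    map_add' := fun x y => TwDual.toLin_injective (σ := σ) <| LinearMap.ext fun g => by
      show σ (TwDual.toLin (σ := σ) g (x + y)) =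
        σ (TwDual.toLin (σ := σ) g x) + σ (TwDual.toLin (σ := σ) g y)
      rw [map_add, σ.map_add]
    map_smul' := fun a x => TwDual.toLin_injective (σ := σ) <| LinearMap.ext fun g => by
      show σ (TwDual.toLin (σ := σ) g (a • x)) =
        σ (MulOpposite.unop a) * σ (TwDual.toLin (σ := σ) g x)
      rw [map_smul, MulOpposite.smul_eq_mul_unop, σ.map_mul] }

/-- The hermitian structure induced by the involution `σ` on the category of right
`A`-modules (realized as modules over `Aᵐᵒᵖ`): `M* = Hom_A(M, A)` with the twisted right
action, and `ω_M(x)(f) = σ(f(x))`. -/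
def dualHerm (σ : RingInvolution A) : HermStructure (ModuleCat.{u} Aᵐᵒᵖ) where
  star := dualStarObj σ
  starMap := dualStarMap σ
  starMap_id M := by
    apply ModuleCat.hom_ext; apply LinearMap.ext; intro g
    refine TwDual.toLin_injective (σ := σ) ?_
    exact LinearMap.ext fun _ => rfl
  starMap_comp f g := by
    apply ModuleCat.hom_ext; apply LinearMap.ext; intro h
    refine TwDual.toLin_injective (σ := σ) ?_
    exact LinearMap.ext fun _ => rfl
  starMap_add {M N} f g := by
    apply ModuleCat.hom_ext; apply LinearMap.ext; intro h
    show (dualStarMap σ (f + g)).hom h = (dualStarMap σ f).hom h + (dualStarMap σ g).hom h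
    refine TwDual.toLin_injective (σ := σ) ?_
    apply LinearMap.ext; intro x
    show TwDual.toLin (σ := σ) h ((f + g).hom x) =
      TwDual.toLin (σ := σ) h (f.hom x) + TwDual.toLin (σ := σ) h (g.hom x)
    rw [ModuleCat.hom_add, LinearMap.add_apply, map_add]
  omega := dualOmega σ
  omega_natural {M N} f := by
    apply ModuleCat.hom_ext; apply LinearMap.ext; intro x
    show (dualOmega σ N).hom (f.hom x) = (dualStarMap σ (dualStarMap σ f)).hom ((dualOmega σ M).hom x)
    refine TwDual.toLin_injective (σ := σ) ?_
    exact LinearMap.ext fun g => rfl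
  omega_star M := by
    apply ModuleCat.hom_ext; apply LinearMap.ext; intro f
    show (dualStarMap σ (dualOmega σ M)).hom ((dualOmega σ (dualStarObj σ M)).hom f) = f
    refine TwDual.toLin_injective (σ := σ) ?_
    apply LinearMap.ext; intro x
    exact σ.invol_apply (TwDual.toLin (σ := σ) f x)

/-- The right adjoint of a sesquilinear form `s`, as a morphism `M ⟶ M*` in the hermitian
category of right `A`-modules. -/
def rAdjHom (σ : RingInvolution A) {M : Type u} [AddCommGroup M] [Module Aᵐᵒᵖ M]
    (s : SesqForm σ M) :
    ModuleCat.of Aᵐᵒᵖ M ⟶ (dualHerm σ).star (ModuleCat.of Aᵐᵒᵖ M) :=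
  ModuleCat.ofHom s.rAdj

/-- A sesquilinear form `(M, s)` over `(A, σ)` is hyperbolic if the unimodular
`1`-hermitian form `F(M, s_r)` over `TDA(Mod-A)` is hyperbolic. -/
def IsHypRingSesq (σ : RingInvolution A) {M : Type u} [AddCommGroup M] [Module Aᵐᵒᵖ M]
    (s : SesqForm σ M) : Prop :=
  (tdaHerm (fun _ : PUnit.{u + 1} => dualHerm σ)).IsHyperbolic 1
    (sysZForm (fun _ : PUnit.{u + 1} => rAdjHom σ s))

/-- A system of sesquilinear forms `(M, {s_i})` over `(A, {σ_i})` is hyperbolic if the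
unimodular `1`-hermitian form `F(M, {(s_i)_r})` over `TDA_I(Mod-A)` is hyperbolic. -/
def IsHypRingSysSesq {ι : Type u} (σI : ι → RingInvolution A) {M : Type u}
    [AddCommGroup M] [Module Aᵐᵒᵖ M] (s : ∀ i, SesqForm (σI i) M) : Prop :=
  (tdaHerm (fun i => dualHerm (σI i))).IsHyperbolic 1
    (sysZForm (fun i => rAdjHom (σI i) (s i)))

end SesqRing


/-! An isometry `F(M, s) ≅ (Q ⊕ Q*, H₁(Q))` in `TDA(C)` is a pair of maps in `C`, and its
`M`-components split `M` as `Q.M ⊕ Q.N`. The hyperbolic form vanishes on `Q` and on `Q*`, and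
compatibility of the isometry with the structure maps `g` turns this into the vanishing of `s`
on both summands. Conversely, if `M = M₁ ⊕ M₂` with `s` vanishing on both summands, then `Z(M, s)`
is the biproduct of the twisted double arrow `Q = (M₁, M₂, s|_{M₁ × M₂})` and of `Q*`, and in
these coordinates the canonical form `(id, id)` is hyperbolic.

For modules, such a decomposition of a unimodular `ε`-hermitian form gives `M₂ ≅ M₁*` through
`m ↦ s(m, -)`, and `M = M₁ ⊕ M₂ ≅ M₁ ⊕ M₁*` is then an isometry onto `H_ε(M₁)`. -/

namespace HermCat

variable {C : Type u} [Category.{v} C] [Preadditive C]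

namespace HermStructure

variable (H : HermStructure C)

theorem omega_comp_starMap_conj {X Y M : C} (j : X ⟶ M) (k : Y ⟶ M) (t : M ⟶ H.star M) :
    H.omega X ≫ H.starMap (k ≫ t ≫ H.starMap j) =
      j ≫ (H.omega M ≫ H.starMap t) ≫ H.starMap k := by
  rw [H.starMap_comp, H.starMap_comp]
  simp only [← Category.assoc]
  rw [← H.omega_natural j]

variable {H}

theorem conj_inv_of_eq_conj {M M' X : C} {s : M ⟶ H.star M} {s' : M' ⟶ H.star M'}
    {f : M ⟶ M'} [IsIso f] (hs : s = f ≫ s' ≫ H.starMap f) (g : X ⟶ M') :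
    (g ≫ inv f) ≫ s ≫ H.starMap (g ≫ inv f) = g ≫ s' ≫ H.starMap g := by
  simp only [hs, ← H.starMap_comp, Category.assoc, IsIso.inv_hom_id_assoc, IsIso.inv_hom_id,
    Category.comp_id]

variable [HasBinaryBiproducts C] (H)

/-- Stated on `Q ⊞ H.star Q` rather than `H.hypObj Q`, so that it rewrites goals in which
`hypObj` has been unfolded and the `biprod` simp lemmas apply. -/
theorem hypForm_eq (ε : ℤ) (Q : C) :
    @Eq (Q ⊞ H.star Q ⟶ H.star (Q ⊞ H.star Q)) (H.hypForm ε Q)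
      (biprod.snd ≫ H.starMap biprod.fst +
        ε • (biprod.fst ≫ H.omega Q ≫ H.starMap biprod.snd)) := by
  refine biprod.lift_desc.trans ?_
  exact congrArg _ ((Preadditive.zsmul_comp _ _ _).trans (congrArg _ (Category.assoc _ _ _)))

theorem lift_hypForm_starMap_lift (ε : ℤ) {Q X : C} (a : X ⟶ Q) (b : X ⟶ H.star Q) :
    (biprod.lift a b : X ⟶ H.hypObj Q) ≫ H.hypForm ε Q ≫ H.starMap (biprod.lift a b) =
      b ≫ H.starMap a + ε • (a ≫ H.omega Q ≫ H.starMap b) := by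
  unfold hypObj
  simp [hypForm_eq, ← H.starMap_comp]

theorem inl_hypForm_starMap_inl (ε : ℤ) (Q : C) :
    (biprod.inl : Q ⟶ H.hypObj Q) ≫ H.hypForm ε Q ≫ H.starMap biprod.inl = 0 := by
  unfold hypObj
  simp [hypForm_eq, ← H.starMap_comp, H.starMap_zero]

theorem inr_hypForm_starMap_inr (ε : ℤ) (Q : C) :
    (biprod.inr : H.star Q ⟶ H.hypObj Q) ≫ H.hypForm ε Q ≫ H.starMap biprod.inr = 0 := by
  unfold hypObj
  simp [hypForm_eq, ← H.starMap_comp, H.starMap_zero]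

end HermStructure

/-- A `BinaryBicone L₁ L₂` satisfying `total`, with cone point fixed to be `M`. -/
structure Splitting (M : C) where
  L₁ : C
  L₂ : C
  inl : L₁ ⟶ M
  inr : L₂ ⟶ M
  fst : M ⟶ L₁
  snd : M ⟶ L₂
  inl_fst : inl ≫ fst = 𝟙 L₁
  inl_snd : inl ≫ snd = 0
  inr_fst : inr ≫ fst = 0
  inr_snd : inr ≫ snd = 𝟙 L₂
  total : fst ≫ inl + snd ≫ inr = 𝟙 M

namespace Splitting

variable {M : C} (S : Splitting M)

theorem fst_inl_comp {X : C} {a : M ⟶ X} (h : S.inr ≫ a = 0) : S.fst ≫ S.inl ≫ a = a := by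
  simpa [h] using S.total =≫ a

theorem snd_inr_comp {X : C} {a : M ⟶ X} (h : S.inl ≫ a = 0) : S.snd ≫ S.inr ≫ a = a := by
  simpa [h] using S.total =≫ a

theorem comp_starMap_inl_comp_starMap_fst (H : HermStructure C) {X : C} (a : X ⟶ M)
    (t : M ⟶ H.star M) (h : a ≫ t ≫ H.starMap S.inr = 0) :
    (a ≫ t ≫ H.starMap S.inl) ≫ H.starMap S.fst = a ≫ t := by
  simpa [H.starMap_add, H.starMap_comp, H.starMap_id, reassoc_of% h] using
    (a ≫ t) ≫= congrArg H.starMap S.total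

theorem comp_starMap_inr_comp_starMap_snd (H : HermStructure C) {X : C} (a : X ⟶ M)
    (t : M ⟶ H.star M) (h : a ≫ t ≫ H.starMap S.inl = 0) :
    (a ≫ t ≫ H.starMap S.inr) ≫ H.starMap S.snd = a ≫ t := by
  simpa [H.starMap_add, H.starMap_comp, H.starMap_id, reassoc_of% h] using
    (a ≫ t) ≫= congrArg H.starMap S.total

end Splitting

variable {ι : Type v} {Hs : ι → HermStructure C}

namespace TDAObj

@[simp] theorem tdaHerm_starMap_φ {Z Z' : TDAObj Hs} (u : Z ⟶ Z') :
    ((tdaHerm Hs).starMap u).φ = u.ψ := rfl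

@[simp] theorem tdaHerm_starMap_ψ {Z Z' : TDAObj Hs} (u : Z ⟶ Z') :
    ((tdaHerm Hs).starMap u).ψ = u.φ := rfl

@[simp] theorem tdaHerm_omega_φ (Z : TDAObj Hs) : ((tdaHerm Hs).omega Z).φ = 𝟙 Z.M := rfl

@[simp] theorem tdaHerm_omega_ψ (Z : TDAObj Hs) : ((tdaHerm Hs).omega Z).ψ = 𝟙 Z.N := rfl

@[simp] theorem sysZForm_φ {M : C} (s : ∀ i, M ⟶ (Hs i).star M) : (sysZForm s).φ = 𝟙 M := rfl

@[simp] theorem sysZForm_ψ {M : C} (s : ∀ i, M ⟶ (Hs i).star M) : (sysZForm s).ψ = 𝟙 M := rfl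

theorem reflexive (Z : TDAObj Hs) : (tdaHerm Hs).Reflexive Z :=
  isIso_of _ (inferInstanceAs (IsIso (𝟙 Z.M))) (inferInstanceAs (IsIso (𝟙 Z.N)))

theorem isotropic_of_conj_sysZForm_eq_zero {M : C} {s : ∀ i, M ⟶ (Hs i).star M}
    {Z : TDAObj Hs} (w : Z ⟶ sysZ s) (hw : w ≫ sysZForm s ≫ (tdaHerm Hs).starMap w = 0)
    (i : ι) : w.φ ≫ s i ≫ (Hs i).starMap w.φ = 0 := by
  have hφ : w.φ ≫ w.ψ = 0 := by
    have h := congrArg Hom.φ hw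
    simp only [comp_φ, tdaHerm_starMap_φ, sysZForm_φ, zero_φ] at h
    -- `(sysZ s).M` is `M` only after unfolding `sysZ`, so `simp` cannot cancel the `𝟙` here
    exact (congrArg (w.φ ≫ ·) (Category.id_comp w.ψ)).symm.trans h
  calc w.φ ≫ s i ≫ (Hs i).starMap w.φ = (Z.g i ≫ (Hs i).starMap w.ψ) ≫ (Hs i).starMap w.φ :=
        (Category.assoc _ _ _).symm.trans (congrArg (· ≫ _) (w.condg i))
    _ = Z.g i ≫ (Hs i).starMap (w.φ ≫ w.ψ) := by
        rw [Category.assoc]; exact congrArg (Z.g i ≫ ·) ((Hs i).starMap_comp _ _).symm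
    _ = 0 := by rw [hφ, (Hs i).starMap_zero, comp_zero]

variable [HasBinaryBiproducts C]

def splittingOfIsoBiprod {Z X Y : TDAObj Hs} (u : Z ⟶ X ⊞ Y) [hu : IsIso u] :
    Splitting Z.M where
  L₁ := X.M
  L₂ := Y.M
  inl := (biprod.inl ≫ inv u).φ
  inr := (biprod.inr ≫ inv u).φ
  fst := (u ≫ biprod.fst).φ
  snd := (u ≫ biprod.snd).φ
  inl_fst := by rw [← comp_φ]; simp
  inl_snd := by rw [← comp_φ]; simp
  inr_fst := by rw [← comp_φ]; simp
  inr_snd := by rw [← comp_φ]; simp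
  total := by
    have h : u ≫ (biprod.fst ≫ biprod.inl + biprod.snd ≫ biprod.inr) ≫ inv u = 𝟙 Z := by
      rw [biprod.total, Category.id_comp, IsIso.hom_inv_id]
    simpa only [Preadditive.add_comp, Preadditive.comp_add, comp_φ, add_φ, id_φ,
      Category.assoc] using congrArg Hom.φ h

end TDAObj

structure IsotropicSplitting {M : C} (s : ∀ i, M ⟶ (Hs i).star M) extends Splitting M where
  isotropic_inl : ∀ i, inl ≫ s i ≫ (Hs i).starMap inl = 0
  isotropic_inr : ∀ i, inr ≫ s i ≫ (Hs i).starMap inr = 0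

namespace IsotropicSplitting

variable {M : C} {s : ∀ i, M ⟶ (Hs i).star M} (S : IsotropicSplitting s)

theorem isotropic_inl_transpose (i : ι) :
    S.inl ≫ ((Hs i).omega M ≫ (Hs i).starMap (s i)) ≫ (Hs i).starMap S.inl = 0 := by
  rw [← (Hs i).omega_comp_starMap_conj, S.isotropic_inl, (Hs i).starMap_zero, comp_zero]

theorem isotropic_inr_transpose (i : ι) :
    S.inr ≫ ((Hs i).omega M ≫ (Hs i).starMap (s i)) ≫ (Hs i).starMap S.inr = 0 := by
  rw [← (Hs i).omega_comp_starMap_conj, S.isotropic_inr, (Hs i).starMap_zero, comp_zero]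

def lagrangian : TDAObj Hs where
  M := S.L₁
  N := S.L₂
  f i := S.inl ≫ ((Hs i).omega M ≫ (Hs i).starMap (s i)) ≫ (Hs i).starMap S.inr
  g i := S.inl ≫ s i ≫ (Hs i).starMap S.inr

theorem star_lagrangian_f (i : ι) : ((tdaHerm Hs).star S.lagrangian).f i =
    S.inr ≫ ((Hs i).omega M ≫ (Hs i).starMap (s i)) ≫ (Hs i).starMap S.inl :=
  (Hs i).omega_comp_starMap_conj S.inr S.inl (s i)

theorem star_lagrangian_g (i : ι) :
    ((tdaHerm Hs).star S.lagrangian).g i = S.inr ≫ s i ≫ (Hs i).starMap S.inl := by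
  have h := (Hs i).omega_comp_starMap_conj S.inr S.inl ((Hs i).omega M ≫ (Hs i).starMap (s i))
  rwa [(Hs i).omega_starMap_key] at h

def toLagrangian : sysZ s ⟶ S.lagrangian :=
  ⟨S.fst, S.inr, fun i => S.fst_inl_comp (S.isotropic_inr_transpose i),
    fun i => S.fst_inl_comp (S.isotropic_inr i)⟩

def toStarLagrangian : sysZ s ⟶ (tdaHerm Hs).star S.lagrangian :=
  ⟨S.snd, S.inl,
    fun i => by rw [star_lagrangian_f]; exact S.snd_inr_comp (S.isotropic_inl_transpose i),
    fun i => by rw [star_lagrangian_g]; exact S.snd_inr_comp (S.isotropic_inl i)⟩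

def ofLagrangian : S.lagrangian ⟶ sysZ s :=
  ⟨S.inl, S.snd,
    fun i => (S.comp_starMap_inr_comp_starMap_snd _ _ _ (S.isotropic_inl_transpose i)).symm,
    fun i => (S.comp_starMap_inr_comp_starMap_snd _ _ _ (S.isotropic_inl i)).symm⟩

def ofStarLagrangian : (tdaHerm Hs).star S.lagrangian ⟶ sysZ s :=
  ⟨S.inr, S.fst,
    fun i => by
      rw [star_lagrangian_f]
      exact (S.comp_starMap_inl_comp_starMap_fst _ _ _ (S.isotropic_inr_transpose i)).symm,
    fun i => by
      rw [star_lagrangian_g]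
      exact (S.comp_starMap_inl_comp_starMap_fst _ _ _ (S.isotropic_inr i)).symm⟩

def bicone : BinaryBicone S.lagrangian ((tdaHerm Hs).star S.lagrangian) where
  pt := sysZ s
  fst := S.toLagrangian
  snd := S.toStarLagrangian
  inl := S.ofLagrangian
  inr := S.ofStarLagrangian
  inl_fst := TDAObj.hom_ext S.inl_fst S.inr_snd
  inl_snd := TDAObj.hom_ext S.inl_snd S.inl_snd
  inr_fst := TDAObj.hom_ext S.inr_fst S.inr_fst
  inr_snd := TDAObj.hom_ext S.inr_snd S.inl_fst

theorem isHyperbolic_sysZForm [HasBinaryBiproducts C] (S : IsotropicSplitting s) :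
    (tdaHerm Hs).IsHyperbolic 1 (sysZForm s) := by
  have hb := isBinaryBilimitOfTotal S.bicone
    (TDAObj.hom_ext S.total ((add_comm _ _).trans S.total))
  refine ⟨S.lagrangian, TDAObj.reflexive _, (biprod.uniqueUpToIso _ _ hb).hom,
    Iso.isIso_hom _, ?_⟩
  refine Eq.trans ?_
    (HermStructure.lift_hypForm_starMap_lift _ 1 S.toLagrangian S.toStarLagrangian).symm
  rw [one_smul]
  apply TDAObj.hom_ext
  · simp only [toLagrangian, toStarLagrangian, TDAObj.add_φ, TDAObj.comp_φ,
      TDAObj.tdaHerm_starMap_φ, TDAObj.tdaHerm_omega_φ, TDAObj.sysZForm_φ]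
    -- `S.lagrangian.M` is `S.L₁` only after unfolding `lagrangian`
    erw [Category.id_comp]
    exact S.total.symm.trans (add_comm _ _)
  · simp only [toLagrangian, toStarLagrangian, TDAObj.add_ψ, TDAObj.comp_ψ,
      TDAObj.tdaHerm_starMap_ψ, TDAObj.tdaHerm_omega_ψ, TDAObj.sysZForm_ψ]
    erw [Category.comp_id]
    exact S.total.symm

end IsotropicSplitting

theorem isHyperbolic_sysZForm_iff [HasBinaryBiproducts C] {M : C}
    (s : ∀ i, M ⟶ (Hs i).star M) :
    (tdaHerm Hs).IsHyperbolic 1 (sysZForm s) ↔ Nonempty (IsotropicSplitting s) := by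
  refine ⟨fun ⟨Q, _, u, hu, hform⟩ => ?_, fun ⟨S⟩ => S.isHyperbolic_sysZForm⟩
  exact ⟨{ toSplitting := TDAObj.splittingOfIsoBiprod u (hu := hu)
           isotropic_inl := TDAObj.isotropic_of_conj_sysZForm_eq_zero _
             ((HermStructure.conj_inv_of_eq_conj hform _).trans
               (HermStructure.inl_hypForm_starMap_inl _ 1 Q))
           isotropic_inr := TDAObj.isotropic_of_conj_sysZForm_eq_zero _
             ((HermStructure.conj_inv_of_eq_conj hform _).trans
               (HermStructure.inr_hypForm_starMap_inr _ 1 Q)) }⟩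

namespace Splitting

variable {R : Type*} [Ring R] {M : Type v} [AddCommGroup M] [Module R M]

theorem isCompl_range (S : Splitting (ModuleCat.of R M)) :
    IsCompl (LinearMap.range S.inl.hom) (LinearMap.range S.inr.hom) := by
  refine ⟨Submodule.disjoint_def.mpr ?_, codisjoint_iff.mpr (Submodule.eq_top_iff'.mpr ?_)⟩
  · rintro _ ⟨a, rfl⟩ ⟨b, hb⟩
    have h₀ : S.fst.hom (S.inr.hom b) = 0 := by simpa using ConcreteCategory.congr_hom S.inr_fst b
    have h₁ : S.fst.hom (S.inl.hom a) = a := by simpa using ConcreteCategory.congr_hom S.inl_fst a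
    rw [← h₁, ← hb, h₀, map_zero]
  · exact fun x => Submodule.mem_sup.mpr
      ⟨_, ⟨_, rfl⟩, _, ⟨_, rfl⟩, by simpa using ConcreteCategory.congr_hom S.total x⟩

def ofIsCompl {M₁ M₂ : Submodule R M} (h : IsCompl M₁ M₂) : Splitting (ModuleCat.of R M) where
  L₁ := ModuleCat.of R M₁
  L₂ := ModuleCat.of R M₂
  inl := ModuleCat.ofHom M₁.subtype
  inr := ModuleCat.ofHom M₂.subtype
  fst := ModuleCat.ofHom (M₁.projectionOnto M₂ h)
  snd := ModuleCat.ofHom (M₂.projectionOnto M₁ h.symm)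
  inl_fst := by ext; simp
  inl_snd := by ext; simp
  inr_fst := by ext; simp
  inr_snd := by ext; simp
  total := by ext; simp [Submodule.projection_add_projection_eq_self]

end Splitting

end HermCat

namespace SesqRing

open CategoryTheory HermCat MulOpposite

variable {A : Type u} [Ring A]

theorem RingInvolution.map_eq_zero_iff (σ : RingInvolution A) {a : A} : σ a = 0 ↔ a = 0 :=
  ⟨fun h => by rw [← σ.invol_apply a, h, σ.map_zero], fun h => h ▸ σ.map_zero⟩

variable {σ : RingInvolution A}

def TwDual.dualMap {M N : Type u} [AddCommGroup M] [Module Aᵐᵒᵖ M] [AddCommGroup N]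
    [Module Aᵐᵒᵖ N] (f : N →ₗ[Aᵐᵒᵖ] M) : TwDual σ M →ₗ[Aᵐᵒᵖ] TwDual σ N where
  toFun g := TwDual.ofLin (g.toLin ∘ₗ f)
  map_add' _ _ := rfl
  map_smul' _ _ := rfl

variable {M : Type u} [AddCommGroup M] [Module Aᵐᵒᵖ M]

namespace SesqForm

def IsTotallyIsotropic (s : SesqForm σ M) (N : Submodule Aᵐᵒᵖ M) : Prop :=
  ∀ x ∈ N, ∀ y ∈ N, s.bil x y = 0

def HasIsotropicDecomposition (s : SesqForm σ M) : Prop :=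
  ∃ M₁ M₂ : Submodule Aᵐᵒᵖ M, IsCompl M₁ M₂ ∧ s.IsTotallyIsotropic M₁ ∧ s.IsTotallyIsotropic M₂

theorem HasIsotropicDecomposition.of_sesqIsometric {M' : Type u} [AddCommGroup M']
    [Module Aᵐᵒᵖ M'] {s : SesqForm σ M} {s' : SesqForm σ M'} (he : SesqIsometric s s')
    (h : s'.HasIsotropicDecomposition) : s.HasIsotropicDecomposition := by
  obtain ⟨e, he⟩ := he
  obtain ⟨M₁, M₂, hc, h₁, h₂⟩ := h
  refine ⟨(Submodule.orderIsoMapComap e).symm M₁, (Submodule.orderIsoMapComap e).symm M₂,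
    (Submodule.orderIsoMapComap e).symm.isCompl_iff.mp hc, ?_, ?_⟩
  · intro x hx y hy
    rw [← he]
    exact h₁ _ hx _ hy
  · intro x hx y hy
    rw [← he]
    exact h₂ _ hx _ hy

variable (s : SesqForm σ M) {M₁ M₂ : Submodule Aᵐᵒᵖ M}

theorem bil_add_add_of_isTotallyIsotropic (h₁ : s.IsTotallyIsotropic M₁)
    (h₂ : s.IsTotallyIsotropic M₂) {a a' m m' : M} (ha : a ∈ M₁) (ha' : a' ∈ M₁) (hm : m ∈ M₂)
    (hm' : m' ∈ M₂) : s.bil (a + m) (a' + m') = s.bil a m' + s.bil m a' := by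
  rw [s.add_left, s.add_right, s.add_right, h₁ a ha a' ha', h₂ m hm m' hm', zero_add, add_zero]

def pairing (M₁ M₂ : Submodule Aᵐᵒᵖ M) : M₂ →ₗ[Aᵐᵒᵖ] TwDual σ M₁ :=
  TwDual.dualMap M₁.subtype ∘ₗ s.lAdj ∘ₗ M₂.subtype

@[simp] theorem pairing_apply (m : M₂) (a : M₁) :
    (s.pairing M₁ M₂ m).toLin a = s.bil m a := rfl

theorem pairing_bijective (hu : Function.Bijective s.lAdj) (hc : IsCompl M₁ M₂)
    (h₁ : s.IsTotallyIsotropic M₁) (h₂ : s.IsTotallyIsotropic M₂) :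
    Function.Bijective (s.pairing M₁ M₂) := by
  refine ⟨(injective_iff_map_eq_zero _).mpr fun m hm => ?_, fun φ => ?_⟩
  · have hlAdj : s.lAdj m = 0 := TwDual.ext' fun x => by
      obtain ⟨a, ha, n, hn, rfl⟩ :=
        Submodule.mem_sup.mp (hc.sup_eq_top ▸ Submodule.mem_top (x := x))
      show s.bil m (a + n) = 0
      rw [s.add_right, h₂ m m.2 n hn, add_zero]
      exact congrArg (fun f : TwDual σ M₁ => f.toLin ⟨a, ha⟩) hm
    exact Subtype.ext (hu.1 (hlAdj.trans (map_zero _).symm))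
  · obtain ⟨x, hx⟩ := hu.2 (TwDual.dualMap (M₁.projectionOnto M₂ hc) φ)
    refine ⟨M₂.projectionOnto M₁ hc.symm x, TwDual.ext' fun a => ?_⟩
    have hxa : s.bil x a = φ.toLin a :=
      (congrArg (fun f : TwDual σ M => f.toLin a) hx).trans
        (congrArg φ.toLin (M₁.projectionOnto_apply_left hc a))
    rw [pairing_apply, ← hxa]
    conv_rhs => rw [← Submodule.projection_add_projection_eq_self hc x]
    rw [s.add_left, h₁ _ (Submodule.projection_apply_mem hc x) _ a.2, zero_add]
    rfl

theorem sesqIsometric_hypSesqForm {ε : ℤ} (hε : ε * ε = 1) (hh : s.IsEpsHermitian ε)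
    (hu : Function.Bijective s.lAdj) (hc : IsCompl M₁ M₂) (h₁ : s.IsTotallyIsotropic M₁)
    (h₂ : s.IsTotallyIsotropic M₂) : SesqIsometric s (hypSesqForm ε σ M₁) := by
  let d := LinearEquiv.ofBijective (s.pairing M₁ M₂) (s.pairing_bijective hu hc h₁ h₂)
  let e : (M₁ × TwDual σ M₁) ≃ₗ[Aᵐᵒᵖ] M :=
    ((LinearEquiv.refl _ _).prodCongr d.symm).trans (Submodule.prodEquivOfIsCompl M₁ M₂ hc)
  refine ⟨e.symm, fun x y => ?_⟩
  obtain ⟨⟨a, φ⟩, rfl⟩ := e.surjective x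
  obtain ⟨⟨a', φ'⟩, rfl⟩ := e.surjective y
  obtain ⟨m, rfl⟩ := d.surjective φ
  obtain ⟨m', rfl⟩ := d.surjective φ'
  rw [e.symm_apply_apply, e.symm_apply_apply]
  show (d m).toLin a' + ε • σ ((d m').toLin a) =
    s.bil (↑a + ↑(d.symm (d m))) (↑a' + ↑(d.symm (d m')))
  rw [d.symm_apply_apply, d.symm_apply_apply,
    s.bil_add_add_of_isTotallyIsotropic h₁ h₂ a.2 a'.2 m.2 m'.2, LinearEquiv.ofBijective_apply,
    LinearEquiv.ofBijective_apply, pairing_apply, pairing_apply, hh, smul_smul, hε, one_smul,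
    add_comm]

end SesqForm

theorem hypSesqForm_hasIsotropicDecomposition (ε : ℤ) (V : Type u) [AddCommGroup V]
    [Module Aᵐᵒᵖ V] : (hypSesqForm ε σ V).HasIsotropicDecomposition := by
  refine ⟨_, _, LinearMap.isCompl_range_inl_inr, ?_, ?_⟩
  · rintro _ ⟨a, rfl⟩ _ ⟨b, rfl⟩
    simp [hypSesqForm, σ.map_zero]
  · rintro _ ⟨a, rfl⟩ _ ⟨b, rfl⟩
    simp [hypSesqForm, σ.map_zero]

theorem comp_rAdjHom_comp_starMap_eq_zero_iff (s : SesqForm σ M) {L : ModuleCat.{u} Aᵐᵒᵖ}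
    (j : L ⟶ ModuleCat.of Aᵐᵒᵖ M) :
    j ≫ rAdjHom σ s ≫ (dualHerm σ).starMap j = 0 ↔ ∀ a b, s.bil (j.hom a) (j.hom b) = 0 := by
  refine ⟨fun h a b => σ.map_eq_zero_iff.mp ?_, fun h => ?_⟩
  · exact DFunLike.congr_fun (congrArg (TwDual.toLin (σ := σ)) (ConcreteCategory.congr_hom h b)) a
  · ext b
    refine TwDual.ext' (σ := σ) fun a => ?_
    show σ (s.bil (j.hom a) (j.hom b)) = 0
    rw [h, σ.map_zero]

theorem isHypRingSesq_iff_hasIsotropicDecomposition (s : SesqForm σ M) :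
    IsHypRingSesq σ s ↔ s.HasIsotropicDecomposition := by
  rw [IsHypRingSesq, isHyperbolic_sysZForm_iff]
  constructor
  · rintro ⟨S⟩
    refine ⟨_, _, S.isCompl_range, ?_, ?_⟩
    · rintro _ ⟨a, rfl⟩ _ ⟨b, rfl⟩
      exact (comp_rAdjHom_comp_starMap_eq_zero_iff s _).mp (S.isotropic_inl ⟨⟩) a b
    · rintro _ ⟨a, rfl⟩ _ ⟨b, rfl⟩
      exact (comp_rAdjHom_comp_starMap_eq_zero_iff s _).mp (S.isotropic_inr ⟨⟩) a b
  · rintro ⟨M₁, M₂, h, h₁, h₂⟩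
    exact ⟨{ toSplitting := Splitting.ofIsCompl h
             isotropic_inl := fun _ => (comp_rAdjHom_comp_starMap_eq_zero_iff s _).mpr
               fun a b => h₁ _ a.2 _ b.2
             isotropic_inr := fun _ => (comp_rAdjHom_comp_starMap_eq_zero_iff s _).mpr
               fun a b => h₂ _ a.2 _ b.2 }⟩

end SesqRing

open SesqRing MulOpposite in
/-- A sesquilinear form `(M, s)` over a ring with involution `(A, σ)` is
hyperbolic iff `M = M₁ ⊕ M₂` with `s(M₁, M₁) = s(M₂, M₂) = 0`; and a unimodular
`ε`-hermitian form is hyperbolic as a sesquilinear form iff it is hyperbolic as a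
unimodular `ε`-hermitian form. -/
theorem isHypRingSesq_iff {A : Type u} [Ring A] (σ : RingInvolution A)
    {M : Type u} [AddCommGroup M] [Module Aᵐᵒᵖ M] (s : SesqForm σ M) :
    (IsHypRingSesq σ s ↔ ∃ M₁ M₂ : Submodule Aᵐᵒᵖ M, IsCompl M₁ M₂ ∧
      (∀ x ∈ M₁, ∀ y ∈ M₁, s.bil x y = 0) ∧ (∀ x ∈ M₂, ∀ y ∈ M₂, s.bil x y = 0)) ∧
    (∀ ε : ℤ, (ε = 1 ∨ ε = -1) → s.Unimodular → s.IsEpsHermitian ε →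
      (IsHypRingSesq σ s ↔
        ∃ (V : Type u) (_ : AddCommGroup V) (_ : Module Aᵐᵒᵖ V),
          SesqIsometric s (hypSesqForm ε σ V))) := by
  refine ⟨isHypRingSesq_iff_hasIsotropicDecomposition s, fun ε hε hu hh => ?_⟩
  rw [isHypRingSesq_iff_hasIsotropicDecomposition]
  constructor
  · rintro ⟨M₁, M₂, hc, h₁, h₂⟩
    have hε' : ε * ε = 1 := by rcases hε with rfl | rfl <;> rfl
    exact ⟨M₁, inferInstance, inferInstance, s.sesqIsometric_hypSesqForm hε' hh hu.2 hc h₁ h₂⟩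
  · rintro ⟨V, _, _, he⟩
    exact .of_sesqIsometric he (hypSesqForm_hasIsotropicDecomposition ε V)
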